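/- Over the alphabet {a < b} with both a and b even, the only infinite smooth word that is also an infinite Lyndon word is the lexicographically minimal infinite smooth word m_{a,b}, which satisfies Φ(m_{a,b}) = a·b^ω. -/
import Mathlib


/-- Strict lexicographic order on infinite words. -/
def InfLex {α : Type*} [LT α] (u v : ℕ → α) : Prop :=
  ∃ k, (∀ j < k, u j = v j) ∧ u k < v k

/-- An infinite word is an infinite Lyndon word if it is lexicographically smaller
than all of its proper suffixes. -/
def IsInfLyndon {α : Type*} [LT α] (w : ℕ → α) : Prop :=
  ∀ i, 0 < i → InfLex w (fun n => w (n + i))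

/-- Partial sums of an infinite sequence of block lengths. -/
def psum (u : ℕ → ℕ) : ℕ → ℕ
  | 0 => 0
  | k + 1 => psum u k + u k

/-- The index of the maximal block containing position `n` in the word whose block
lengths are given by `u`. -/
def blockIdx (u : ℕ → ℕ) (n : ℕ) : ℕ :=
  Nat.findGreatest (fun k => psum u k ≤ n) n

/-- `expand x y u` is the infinite word `x^{u 0} y^{u 1} x^{u 2} ⋯` whose run-length
encoding is `u` and whose letters alternate between `x` and `y`, starting with `x`;
i.e. the pseudo-inverse `Δ⁻¹_x(u)` over the alphabet `{x, y}`. -/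
def expand (x y : ℕ) (u : ℕ → ℕ) (n : ℕ) : ℕ :=
  if blockIdx u n % 2 = 0 then x else y

/-- `SmoothChain a b W` says that `W k` is the sequence of iterated run-length
encodings `Δᵏ(W 0)` over the alphabet `{a, b}`: each `W k` is a word over `{a, b}`
and is recovered from its run-length encoding `W (k+1)` by alternating expansion
starting with its own first letter. -/
def SmoothChain (a b : ℕ) (W : ℕ → ℕ → ℕ) : Prop :=
  ∀ k, (∀ n, W k n = a ∨ W k n = b) ∧
    W k = expand (W k 0) (if W k 0 = a then b else a) (W (k + 1))

/-- An infinite word `w` is smooth over `{a, b}` if all its iterated run-length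
encodings `Δᵏ(w)` are infinite words over `{a, b}`. -/
def IsSmooth (a b : ℕ) (w : ℕ → ℕ) : Prop :=
  ∃ W : ℕ → ℕ → ℕ, W 0 = w ∧ SmoothChain a b W

lemma psum_succ (u : ℕ → ℕ) (k : ℕ) : psum u (k+1) = psum u k + u k := rfl

lemma psum_one (u : ℕ → ℕ) : psum u 1 = u 0 := by simp [psum]

lemma psum_mono (u : ℕ → ℕ) : Monotone (psum u) := by
  apply monotone_nat_of_le_succ
  intro n
  rw [psum_succ]
  exact Nat.le_add_right _ _

lemma le_psum {u : ℕ → ℕ} (hpos : ∀ n, 0 < u n) (j : ℕ) : j ≤ psum u j := by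
  induction j with
  | zero => simp [psum]
  | succ j ih => have := hpos j; rw [psum_succ]; omega

lemma two_mul_le_psum {u : ℕ → ℕ} (h : ∀ n, 2 ≤ u n) (j : ℕ) : 2 * j ≤ psum u j := by
  induction j with
  | zero => simp [psum]
  | succ j ih => have := h j; rw [psum_succ]; omega

lemma psum_congr {u u' : ℕ → ℕ} : ∀ {j}, (∀ n < j, u n = u' n) → psum u j = psum u' j := by
  intro j
  induction j with
  | zero => intro _; rfl
  | succ j ih =>
    intro h
    rw [psum_succ, psum_succ, ih (fun n hn => h n (by omega)), h j (by omega)]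

lemma psum_mod_two {u : ℕ → ℕ} (h : ∀ n, u n % 2 = 0) (j : ℕ) : psum u j % 2 = 0 := by
  induction j with
  | zero => rfl
  | succ j ih => have := h j; rw [psum_succ]; omega

lemma psum_shift (u : ℕ → ℕ) (r : ℕ) : ∀ j, psum u (r + j) = psum u r + psum (fun m => u (m + r)) j := by
  intro j
  induction j with
  | zero => simp [psum]
  | succ j ih =>
    have e : r + (j+1) = (r+j) + 1 := by omega
    rw [e, psum_succ, ih, psum_succ]
    have e2 : r + j = j + r := Nat.add_comm r j
    rw [e2]
    omega

lemma blockIdx_eq {u : ℕ → ℕ} (hpos : ∀ n, 0 < u n) {j n : ℕ}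
    (h1 : psum u j ≤ n) (h2 : n < psum u (j + 1)) : blockIdx u n = j := by
  have hj : j ≤ n := le_trans (le_psum hpos j) h1
  unfold blockIdx
  rw [Nat.findGreatest_eq_iff]
  refine ⟨hj, fun _ => h1, fun m hm hmn hP => ?_⟩
  have := psum_mono u (show j + 1 ≤ m by omega)
  omega

lemma blockIdx_spec {u : ℕ → ℕ} (hpos : ∀ n, 0 < u n) (n : ℕ) :
    psum u (blockIdx u n) ≤ n ∧ n < psum u (blockIdx u n + 1) := by
  have h1 : psum u (blockIdx u n) ≤ n :=
    Nat.findGreatest_spec (P := fun k => psum u k ≤ n) (m := 0) (Nat.zero_le n) (Nat.zero_le n)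
  refine ⟨h1, ?_⟩
  by_contra hcon
  push_neg at hcon
  have hle : blockIdx u n + 1 ≤ n := le_trans (le_psum hpos _) hcon
  exact Nat.findGreatest_is_greatest (P := fun k => psum u k ≤ n) (n := n)
    (k := blockIdx u n + 1) (Nat.lt_succ_self _) hle hcon

lemma expand_apply {u : ℕ → ℕ} (hpos : ∀ n, 0 < u n) {x y j n : ℕ}
    (h1 : psum u j ≤ n) (h2 : n < psum u (j + 1)) :
    expand x y u n = if j % 2 = 0 then x else y := by
  unfold expand
  rw [blockIdx_eq hpos h1 h2]

lemma findGreatest_congr {P Q : ℕ → Prop} [DecidablePred P] [DecidablePred Q] :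
    ∀ {n}, (∀ k ≤ n, (P k ↔ Q k)) → Nat.findGreatest P n = Nat.findGreatest Q n := by
  intro n
  induction n with
  | zero => intro _; rfl
  | succ n ih =>
    intro h
    rw [Nat.findGreatest_succ, Nat.findGreatest_succ]
    by_cases hp : P (n+1)
    · rw [if_pos hp, if_pos ((h _ le_rfl).mp hp)]
    · rw [if_neg hp, if_neg (fun hq => hp ((h _ le_rfl).mpr hq)),
        ih (fun k hk => h k (by omega))]

lemma blockIdx_congr {u u' : ℕ → ℕ} {n : ℕ} (h : ∀ m < n, u m = u' m) :
    blockIdx u n = blockIdx u' n := by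
  unfold blockIdx
  exact findGreatest_congr (fun k hk => by rw [psum_congr (fun m hm => h m (by omega))])

lemma expand_shift {u : ℕ → ℕ} (hpos : ∀ n, 0 < u n) {x y r : ℕ} (hr : r % 2 = 0) (n : ℕ) :
    expand x y u (psum u r + n) = expand x y (fun m => u (m + r)) n := by
  set u' : ℕ → ℕ := fun m => u (m + r) with hu'
  have hpos' : ∀ m, 0 < u' m := fun m => hpos _
  obtain ⟨h1, h2⟩ := blockIdx_spec hpos' n
  rw [expand_apply hpos' h1 h2]
  set j := blockIdx u' n with hj
  have e1 : psum u (r + j) = psum u r + psum u' j := psum_shift u r j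
  have e1' : psum u (r + j + 1) = psum u r + psum u' (j + 1) := by
    have := psum_shift u r (j+1)
    rw [show r + (j+1) = r + j + 1 from by omega] at this
    exact this
  have l1 : psum u (r + j) ≤ psum u r + n := by omega
  have l2 : psum u r + n < psum u (r + j + 1) := by omega
  rw [expand_apply hpos l1 l2]
  have : (r + j) % 2 = j % 2 := by omega
  rw [this]

lemma transfer {a b x y : ℕ} (ha : 0 < a) (hab : a < b) (hae : Even a) (hbe : Even b)
    (hxy : (x = a ∧ y = b) ∨ (x = b ∧ y = a))
    {u u' : ℕ → ℕ} (hu : ∀ n, u n = a ∨ u n = b) (hu' : ∀ n, u' n = a ∨ u' n = b)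
    {S : Prop} {q : ℕ} (hqe : q % 2 = 0) (hagree : ∀ n < q, u n = u' n)
    (hne : u q ≠ u' q) (hiff : u q < u' q ↔ S) :
    ∃ p, p % 2 = 0 ∧ (∀ n < p, expand x y u n = expand x y u' n) ∧
      expand x y u p ≠ expand x y u' p ∧
      (expand x y u p < expand x y u' p ↔ (S ↔ x = b)) := by
  have ha2 : 2 ≤ a := by rcases hae with ⟨c, hc⟩; omega
  have hpos : ∀ n, 0 < u n := fun n => by rcases hu n with h | h <;> omega
  have hpos' : ∀ n, 0 < u' n := fun n => by rcases hu' n with h | h <;> omega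
  have hae' := Nat.even_iff.mp hae
  have hbe' := Nat.even_iff.mp hbe
  have hmod : ∀ n, u n % 2 = 0 := fun n => by rcases hu n with h | h <;> rw [h] <;> omega
  have hxyne : x ≠ y := by rcases hxy with ⟨rfl, rfl⟩ | ⟨rfl, rfl⟩ <;> omega
  have hps : ∀ j ≤ q, psum u j = psum u' j :=
    fun j hj => psum_congr (fun m hm => hagree m (by omega))
  have hlow : ∀ n < psum u q, expand x y u n = expand x y u' n := by
    intro n hn
    obtain ⟨l1, l2⟩ := blockIdx_spec hpos n
    have hjq : blockIdx u n < q := by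
      by_contra hge
      push_neg at hge
      have := psum_mono u hge
      omega
    have l1' : psum u' (blockIdx u n) ≤ n := by rw [← hps _ (by omega)]; exact l1
    have l2' : n < psum u' (blockIdx u n + 1) := by rw [← hps _ (by omega)]; exact l2
    rw [expand_apply hpos l1 l2, expand_apply hpos' l1' l2']
  have hpq : psum u q = psum u' q := hps q le_rfl
  have hpqe : psum u q % 2 = 0 := psum_mod_two hmod q
  rcases hu q with hq1 | hq1 <;> rcases hu' q with hq2 | hq2
  · exact absurd (hq1.trans hq2.symm) hne
  · -- u q = a, u' q = b
    have hS : S := hiff.mp (by omega)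
    refine ⟨psum u q + a, by omega, ?_, ?_, ?_⟩
    · intro n hn
      rcases lt_or_ge n (psum u q) with h | h
      · exact hlow n h
      · rw [expand_apply hpos (j := q) h (by rw [psum_succ]; omega),
          expand_apply hpos' (j := q) (by omega) (by rw [psum_succ]; omega)]
    · rw [expand_apply hpos (j := q + 1) (by rw [psum_succ]; omega)
        (by rw [psum_succ, psum_succ]; have := hpos (q+1); omega),
        expand_apply hpos' (j := q) (by omega) (by rw [psum_succ]; omega),
        if_neg (by omega), if_pos hqe]
      exact fun h => hxyne h.symm
    · rw [expand_apply hpos (j := q + 1) (by rw [psum_succ]; omega)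
        (by rw [psum_succ, psum_succ]; have := hpos (q+1); omega),
        expand_apply hpos' (j := q) (by omega) (by rw [psum_succ]; omega),
        if_neg (by omega), if_pos hqe]
      rcases hxy with ⟨rfl, rfl⟩ | ⟨rfl, rfl⟩
      · exact ⟨fun h => absurd h (by omega), fun h => absurd (h.mp hS) (by omega)⟩
      · exact ⟨fun _ => iff_of_true hS rfl, fun _ => hab⟩
  · -- u q = b, u' q = a
    have hnS : ¬ S := fun s => by have := hiff.mpr s; omega
    refine ⟨psum u q + a, by omega, ?_, ?_, ?_⟩
    · intro n hn
      rcases lt_or_ge n (psum u q) with h | h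
      · exact hlow n h
      · rw [expand_apply hpos (j := q) h (by rw [psum_succ]; omega),
          expand_apply hpos' (j := q) (by omega) (by rw [psum_succ]; omega)]
    · rw [expand_apply hpos (j := q) (by omega) (by rw [psum_succ]; omega),
        expand_apply hpos' (j := q + 1) (by rw [psum_succ]; omega)
          (by rw [psum_succ, psum_succ]; have := hpos' (q+1); omega),
        if_pos hqe, if_neg (by omega)]
      exact hxyne
    · rw [expand_apply hpos (j := q) (by omega) (by rw [psum_succ]; omega),
        expand_apply hpos' (j := q + 1) (by rw [psum_succ]; omega)
          (by rw [psum_succ, psum_succ]; have := hpos' (q+1); omega),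
        if_pos hqe, if_neg (by omega)]
      rcases hxy with ⟨rfl, rfl⟩ | ⟨rfl, rfl⟩
      · exact ⟨fun _ => iff_of_false hnS (by omega), fun _ => hab⟩
      · exact ⟨fun h => absurd h (by omega), fun h => absurd (h.mpr rfl) hnS⟩
  · exact absurd (hq1.trans hq2.symm) hne

lemma chain_xy {a b : ℕ} (hab : a < b) {W : ℕ → ℕ → ℕ} (hWc : SmoothChain a b W) (k : ℕ) :
    (W k 0 = a ∧ (if W k 0 = a then b else a) = b) ∨
    (W k 0 = b ∧ (if W k 0 = a then b else a) = a) := by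
  rcases (hWc k).1 0 with h | h
  · exact Or.inl ⟨h, if_pos h⟩
  · exact Or.inr ⟨h, if_neg (by omega)⟩

lemma chain_pos {a b : ℕ} (ha : 0 < a) (hab : a < b) {W : ℕ → ℕ → ℕ}
    (hWc : SmoothChain a b W) (k : ℕ) : ∀ n, 0 < W k n := by
  intro n; rcases (hWc k).1 n with h | h <;> omega

lemma chain_mod {a b : ℕ} (hae : Even a) (hbe : Even b) {W : ℕ → ℕ → ℕ}
    (hWc : SmoothChain a b W) (k : ℕ) : ∀ n, W k n % 2 = 0 := by
  have := Nat.even_iff.mp hae; have := Nat.even_iff.mp hbe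
  intro n; rcases (hWc k).1 n with h | h <;> omega

lemma chain_ext {a b : ℕ} {W W' : ℕ → ℕ → ℕ} (hWc : SmoothChain a b W)
    (hW'c : SmoothChain a b W') (h0 : ∀ k, W k 0 = W' k 0) : ∀ n k, W k n = W' k n := by
  intro n
  induction n using Nat.strong_induction_on with
  | _ n ih =>
    intro k
    have e1 := congrFun (hWc k).2 n
    have e2 := congrFun (hW'c k).2 n
    rw [e1, e2, h0 k]
    unfold expand
    rw [blockIdx_congr (fun m hm => ih m hm (k+1))]

lemma cmp_step {a b : ℕ} (ha : 0 < a) (hab : a < b) (hae : Even a) (hbe : Even b)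
    {U V : ℕ → ℕ → ℕ} (hU : SmoothChain a b U) (hV : SmoothChain a b V)
    (j : ℕ) (hx : U j 0 = V j 0) {S : Prop}
    (h : ∃ q, q % 2 = 0 ∧ (∀ n < q, U (j+1) n = V (j+1) n) ∧ U (j+1) q ≠ V (j+1) q ∧
      (U (j+1) q < V (j+1) q ↔ S)) :
    ∃ p, p % 2 = 0 ∧ (∀ n < p, U j n = V j n) ∧ U j p ≠ V j p ∧
      (U j p < V j p ↔ (S ↔ U j 0 = b)) := by
  obtain ⟨q, hqe, hag, hne, hiff⟩ := h
  obtain ⟨p, hpe, hagp, hnep, hiffp⟩ := transfer ha hab hae hbe (chain_xy hab hU j)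
    ((hU (j+1)).1) ((hV (j+1)).1) hqe hag hne hiff
  have eU : U j = expand (U j 0) (if U j 0 = a then b else a) (U (j+1)) := (hU j).2
  have eV : V j = expand (U j 0) (if U j 0 = a then b else a) (V (j+1)) := by
    have := (hV j).2; rw [← hx] at this; exact this
  simp only [← eU, ← eV] at hagp hnep hiffp
  exact ⟨p, hpe, hagp, hnep, hiffp⟩

lemma suf_step {a b : ℕ} (ha : 0 < a) (hab : a < b) (hae : Even a) (hbe : Even b)
    {W : ℕ → ℕ → ℕ} (hWc : SmoothChain a b W) (j t : ℕ) (ht : 0 < t) (hte : t % 2 = 0)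
    {S : Prop}
    (h : ∃ q, q % 2 = 0 ∧ (∀ n < q, W (j+1) n = W (j+1) (n + t)) ∧
      W (j+1) q ≠ W (j+1) (q + t) ∧ (W (j+1) q < W (j+1) (q + t) ↔ S)) :
    ∃ t', 0 < t' ∧ t' % 2 = 0 ∧ ∃ p, p % 2 = 0 ∧ (∀ n < p, W j n = W j (n + t')) ∧
      W j p ≠ W j (p + t') ∧ (W j p < W j (p + t') ↔ (S ↔ W j 0 = b)) := by
  obtain ⟨q, hqe, hag, hne, hiff⟩ := h
  have hpos : ∀ n, 0 < W (j+1) n := chain_pos ha hab hWc (j+1)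
  have hmod : ∀ n, W (j+1) n % 2 = 0 := chain_mod hae hbe hWc (j+1)
  have hvals' : ∀ n, (fun m => W (j+1) (m + t)) n = a ∨ (fun m => W (j+1) (m + t)) n = b :=
    fun n => (hWc (j+1)).1 (n + t)
  obtain ⟨p, hpe, hagp, hnep, hiffp⟩ := transfer ha hab hae hbe (chain_xy hab hWc j)
    ((hWc (j+1)).1) hvals' hqe (fun n hn => hag n hn) hne hiff
  have es : ∀ n, expand (W j 0) (if W j 0 = a then b else a) (fun m => W (j+1) (m + t)) n
      = expand (W j 0) (if W j 0 = a then b else a) (W (j+1)) (psum (W (j+1)) t + n) :=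
    fun n => (expand_shift hpos hte n).symm
  simp only [es] at hagp hnep hiffp
  have eW : W j = expand (W j 0) (if W j 0 = a then b else a) (W (j+1)) := (hWc j).2
  simp only [← eW] at hagp hnep hiffp
  have htpos : 0 < psum (W (j+1)) t := by
    have h1 := psum_mono (W (j+1)) (show 1 ≤ t from ht)
    have h2 := psum_one (W (j+1))
    have := hpos 0
    omega
  refine ⟨psum (W (j+1)) t, htpos, psum_mod_two hmod t, p, hpe, ?_, ?_, ?_⟩
  · intro n hn
    rw [Nat.add_comm n (psum (W (j+1)) t)]
    exact hagp n hn
  · rw [Nat.add_comm p (psum (W (j+1)) t)]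
    exact hnep
  · rw [Nat.add_comm p (psum (W (j+1)) t)]
    exact hiffp

lemma lyndon_phi {a b : ℕ} (ha : 0 < a) (hab : a < b) (hae : Even a) (hbe : Even b)
    {W : ℕ → ℕ → ℕ} (hWc : SmoothChain a b W) (hL : IsInfLyndon (W 0)) :
    ∀ k, W k 0 = if k = 0 then a else b := by
  classical
  have hw0 : W 0 0 = a := by
    rcases (hWc 0).1 0 with h | h
    · exact h
    exfalso
    have hpos : ∀ n, 0 < W 1 n := chain_pos ha hab hWc 1
    have ht0 : 0 < psum (W 1) 1 := by rw [psum_one]; exact hpos 0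
    have hWt : W 0 (psum (W 1) 1) = a := by
      have e := congrFun (hWc 0).2 (psum (W 1) 1)
      simp only [Nat.zero_add] at e
      rw [e, expand_apply hpos (j := 1) le_rfl
        (by have h2 := psum_succ (W 1) 1; have := hpos 1; omega),
        if_neg (by omega), if_neg (by omega)]
    obtain ⟨k, hag, hlt⟩ := hL (psum (W 1) 1) ht0
    have hlt' : W 0 k < W 0 (k + psum (W 1) 1) := hlt
    rcases Nat.eq_zero_or_pos k with rfl | hk
    · rw [Nat.zero_add] at hlt'; omega
    · have := hag 0 hk
      have h00 : W 0 0 = W 0 (0 + psum (W 1) 1) := this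
      rw [Nat.zero_add] at h00
      omega
  intro k
  by_cases hk0 : k = 0
  · simp [hk0, hw0]
  · rw [if_neg hk0]
    by_contra hkb
    have hka : W k 0 = a := by
      rcases (hWc k).1 0 with h | h
      · exact h
      · exact absurd h hkb
    have hex : ∃ m, 0 < m ∧ W m 0 = a := ⟨k, Nat.pos_of_ne_zero hk0, hka⟩
    set K := Nat.find hex with hK
    obtain ⟨hKpos, hKa⟩ := Nat.find_spec hex
    have hbelow : ∀ j, 0 < j → j < K → W j 0 = b := by
      intro j hj hjK
      rcases (hWc j).1 0 with h | h
      · exact absurd ⟨hj, h⟩ (Nat.find_min hex hjK)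
      · exact h
    -- base at level K
    have hbase : ∃ t, 0 < t ∧ t % 2 = 0 ∧ ∃ q, q % 2 = 0 ∧
        (∀ n < q, W K n = W K (n + t)) ∧ W K q ≠ W K (q + t) ∧
        (W K q < W K (q + t) ↔ True) := by
      have hpos : ∀ n, 0 < W (K+1) n := chain_pos ha hab hWc (K+1)
      have hmod : ∀ n, W (K+1) n % 2 = 0 := chain_mod hae hbe hWc (K+1)
      have hWt : W K (psum (W (K+1)) 1) = b := by
        have e := congrFun (hWc K).2 (psum (W (K+1)) 1)
        rw [e, expand_apply hpos (j := 1) le_rfl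
          (by have h2 := psum_succ (W (K+1)) 1; have := hpos 1; omega),
          if_neg (by omega), if_pos hKa]
      refine ⟨psum (W (K+1)) 1, by rw [psum_one]; exact hpos 0, psum_mod_two hmod 1,
        0, by omega, fun n hn => absurd hn (Nat.not_lt_zero n), ?_, ?_⟩
      · rw [Nat.zero_add, hKa, hWt]; omega
      · rw [Nat.zero_add, hKa, hWt]; exact ⟨fun _ => trivial, fun _ => hab⟩
    -- descent
    have hdesc : ∀ d, d ≤ K - 1 → ∃ t, 0 < t ∧ t % 2 = 0 ∧ ∃ q, q % 2 = 0 ∧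
        (∀ n < q, W (K-d) n = W (K-d) (n + t)) ∧ W (K-d) q ≠ W (K-d) (q + t) ∧
        (W (K-d) q < W (K-d) (q + t) ↔ True) := by
      intro d
      induction d with
      | zero => intro _; simpa using hbase
      | succ d ihd =>
        intro hd
        obtain ⟨t, ht, hte, hq⟩ := ihd (by omega)
        rw [show K - d = (K - (d+1)) + 1 from by omega] at hq
        have hstep := suf_step ha hab hae hbe hWc (K - (d+1)) t ht hte (S := True) hq
        obtain ⟨t', ht', hte', p, hpe, hagp, hnep, hiffp⟩ := hstep
        have hWb : W (K - (d+1)) 0 = b := hbelow _ (by omega) (by omega)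
        refine ⟨t', ht', hte', p, hpe, hagp, hnep, ?_⟩
        rw [hiffp]
        simp [hWb]
    obtain ⟨t, ht, hte, hq⟩ := hdesc (K-1) le_rfl
    rw [show K - (K-1) = 1 from by omega] at hq
    obtain ⟨t', ht', hte', p, hpe, hagp, hnep, hiffp⟩ :=
      suf_step ha hab hae hbe hWc 0 t ht hte (S := True) hq
    have hnlt : ¬ (W 0 p < W 0 (p + t')) := by
      intro hlt
      have h1 := (hiffp.mp hlt).mp trivial
      omega
    obtain ⟨k', hagL, hltL⟩ := hL t' ht'
    have hltL' : W 0 k' < W 0 (k' + t') := hltL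
    rcases lt_trichotomy k' p with h | rfl | h
    · have := hagp k' h; omega
    · exact hnlt hltL'
    · have h2 : W 0 p = W 0 (p + t') := hagL p h
      exact hnep h2

lemma phi_min {a b : ℕ} (ha : 0 < a) (hab : a < b) (hae : Even a) (hbe : Even b)
    {W : ℕ → ℕ → ℕ} (hWc : SmoothChain a b W)
    (hphi : ∀ k, W k 0 = if k = 0 then a else b) :
    ∀ w', IsSmooth a b w' → ¬ InfLex w' (W 0) := by
  classical
  rintro w' ⟨V, hV0, hVc⟩ hlex
  subst hV0
  obtain ⟨k, hag, hlt⟩ := hlex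
  have hlt' : V 0 k < W 0 k := hlt
  have hag' : ∀ j < k, V 0 j = W 0 j := hag
  have hW00 : W 0 0 = a := by simpa using hphi 0
  by_cases hall : ∀ m, V m 0 = W m 0
  · have hext := chain_ext hVc hWc hall
    have : V 0 k = W 0 k := hext k 0
    omega
  · push_neg at hall
    set K := Nat.find hall with hKdef
    have hKne : V K 0 ≠ W K 0 := Nat.find_spec hall
    have hbelow : ∀ j < K, V j 0 = W j 0 := fun j hj => not_ne_iff.mp (Nat.find_min hall hj)
    have hfin : ∃ p, (∀ n < p, V 0 n = W 0 n) ∧ V 0 p ≠ W 0 p ∧ ¬ (V 0 p < W 0 p) := by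
      rcases Nat.eq_zero_or_pos K with hK0 | hKpos
      · rw [hK0] at hKne
        have hV00 : V 0 0 = b := by
          rcases (hVc 0).1 0 with h | h
          · exact absurd (h.trans hW00.symm) hKne
          · exact h
        exact ⟨0, fun n hn => absurd hn (Nat.not_lt_zero n),
          by omega, by omega⟩
      · have hWK : W K 0 = b := by rw [hphi K]; exact if_neg (by omega)
        have hVK : V K 0 = a := by
          rcases (hVc K).1 0 with h | h
          · exact h
          · exact absurd (h.trans hWK.symm) hKne
        have hD : ∀ d, d ≤ K - 1 → ∃ q, q % 2 = 0 ∧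
            (∀ n < q, V (K-d) n = W (K-d) n) ∧ V (K-d) q ≠ W (K-d) q ∧
            (V (K-d) q < W (K-d) q ↔ True) := by
          intro d
          induction d with
          | zero =>
            intro _
            refine ⟨0, by omega, fun n hn => absurd hn (Nat.not_lt_zero n), ?_, ?_⟩
            · simp only [Nat.sub_zero]; omega
            · simp only [Nat.sub_zero]
              rw [hVK, hWK]
              exact ⟨fun _ => trivial, fun _ => hab⟩
          | succ d ihd =>
            intro hd
            obtain ⟨q, hqe, hagq, hneq, hiffq⟩ := ihd (by omega)
            rw [show K - d = (K - (d+1)) + 1 from by omega] at hagq hneq hiffq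
            have hx : V (K - (d+1)) 0 = W (K - (d+1)) 0 := hbelow _ (by omega)
            obtain ⟨p, hpe, hagp, hnep, hiffp⟩ := cmp_step ha hab hae hbe hVc hWc
              (K - (d+1)) hx ⟨q, hqe, hagq, hneq, hiffq⟩
            refine ⟨p, hpe, hagp, hnep, ?_⟩
            rw [hiffp]
            have hVjb : V (K - (d+1)) 0 = b := by
              rw [hx, hphi]
              exact if_neg (by omega)
            simp [hVjb]
        obtain ⟨q, hqe, hagq, hneq, hiffq⟩ := hD (K-1) le_rfl
        rw [show K - (K-1) = 1 from by omega] at hagq hneq hiffq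
        obtain ⟨p, hpe, hagp, hnep, hiffp⟩ := cmp_step ha hab hae hbe hVc hWc
          0 (hbelow 0 hKpos) ⟨q, hqe, hagq, hneq, hiffq⟩
        refine ⟨p, hagp, hnep, ?_⟩
        intro hltp
        have h1 := (hiffp.mp hltp).mp trivial
        have hV00 : V 0 0 = a := (hbelow 0 hKpos).trans hW00
        omega
    obtain ⟨p, hagp, hnep, hnltp⟩ := hfin
    rcases lt_trichotomy k p with h | rfl | h
    · have := hagp k h; omega
    · exact hnltp hlt'
    · exact hnep (hag' p h)

lemma claimC {a b : ℕ} (ha : 0 < a) (hab : a < b) (hae : Even a) (hbe : Even b)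
    {v : ℕ → ℕ} (hval : ∀ n, v n = a ∨ v n = b) (hv : v = expand b a v) :
    ∀ r, 0 < r → r % 2 = 0 →
      ∃ q, q % 2 = 0 ∧ (∀ n < q, v n = v (n + r)) ∧ v q = b ∧ v (q + r) = a := by
  have ha2 : 2 ≤ a := by rcases hae with ⟨c, hc⟩; omega
  have hpos : ∀ n, 0 < v n := fun n => by rcases hval n with h | h <;> omega
  have hae' := Nat.even_iff.mp hae
  have hbe' := Nat.even_iff.mp hbe
  have hmod : ∀ n, v n % 2 = 0 := fun n => by rcases hval n with h | h <;> rw [h] <;> omega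
  have h2le : ∀ n, 2 ≤ v n := fun n => by rcases hval n with h | h <;> omega
  have hv0 : v 0 = b := by
    have e := congrFun hv 0
    rw [expand_apply hpos (j := 0) (n := 0) (Nat.le_refl 0)
      (by have h1 := psum_succ v 0; have h0 : psum v 0 = 0 := rfl; have := hpos 0; omega)] at e
    simpa using e
  intro r
  induction r using Nat.strong_induction_on with
  | _ r ih =>
    intro hr hre
    obtain ⟨hL, hR⟩ := blockIdx_spec hpos r
    set ρ := blockIdx v r with hρdef
    rcases hval r with hvr | hvr
    · exact ⟨0, by omega, fun n hn => absurd hn (Nat.not_lt_zero n), hv0,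
        by rw [Nat.zero_add]; exact hvr⟩
    · have hρe : ρ % 2 = 0 := by
        by_contra hodd
        have e := congrFun hv r
        rw [expand_apply hpos hL hR, if_neg hodd] at e
        omega
      have hps := psum_succ v ρ
      have hpse : psum v ρ % 2 = 0 := psum_mod_two hmod ρ
      have hvρm := hmod ρ
      by_cases hl : psum v ρ + v ρ - r < b
      · set l := psum v ρ + v ρ - r with hldef
        refine ⟨l, by omega, ?_, ?_, ?_⟩
        · intro n hn
          have h1 : v n = b := by
            have e := congrFun hv n
            rw [expand_apply hpos (j := 0) (Nat.zero_le n)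
              (by have h1 := psum_succ v 0; have h0 : psum v 0 = 0 := rfl; omega)] at e
            simpa using e
          have h2 : v (n + r) = b := by
            have e := congrFun hv (n + r)
            rw [expand_apply hpos (j := ρ) (by omega) (by omega), if_pos hρe] at e
            exact e
          rw [h1, h2]
        · have e := congrFun hv l
          rw [expand_apply hpos (j := 0) (Nat.zero_le l)
            (by have h1 := psum_succ v 0; have h0 : psum v 0 = 0 := rfl; omega)] at e
          simpa using e
        · have e := congrFun hv (l + r)
          rw [expand_apply hpos (j := ρ + 1) (by omega)
            (by have h1 := psum_succ v (ρ+1); have := hpos (ρ+1); omega),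
            if_neg (by omega)] at e
          exact e
      · have hvρb : v ρ ≤ b := by rcases hval ρ with h | h <;> omega
        have hrps : r = psum v ρ := by omega
        have hρpos : 0 < ρ := by
          rcases Nat.eq_zero_or_pos ρ with h0 | h
          · exfalso; have h00 : psum v 0 = 0 := rfl; rw [h0] at hrps; omega
          · exact h
        have hρlt : ρ < r := by have := two_mul_le_psum h2le ρ; omega
        obtain ⟨q, hqe, hqag, hqb, hqa⟩ := ih ρ hρlt hρpos hρe
        have hvals' : ∀ n, (fun m => v (m + ρ)) n = a ∨ (fun m => v (m + ρ)) n = b :=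
          fun n => hval (n + ρ)
        obtain ⟨p, hpe, hagp, hnep, hiffp⟩ := transfer ha hab hae hbe (Or.inr ⟨rfl, rfl⟩)
          hval hvals' hqe (fun n hn => hqag n hn)
          (show v q ≠ v (q + ρ) by rw [hqb, hqa]; omega)
          (show v q < v (q + ρ) ↔ False by rw [hqb, hqa]; exact iff_of_false (by omega) id)
        have hgt : ¬ (expand b a v p < expand b a (fun m => v (m + ρ)) p) :=
          fun hlt => (hiffp.mp hlt).mpr rfl
        have es : ∀ n, expand b a (fun m => v (m + ρ)) n
            = expand b a v (psum v ρ + n) := fun n => (expand_shift hpos hρe n).symm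
        simp only [es] at hagp hnep hgt
        simp only [← hv] at hagp hnep hgt
        have hvp : v p = b ∧ v (psum v ρ + p) = a := by
          rcases hval p with h1 | h1 <;> rcases hval (psum v ρ + p) with h2 | h2 <;>
            simp [h1, h2] at hnep hgt ⊢ <;> omega
        refine ⟨p, hpe, ?_, hvp.1, ?_⟩
        · intro n hn
          rw [hrps, Nat.add_comm n (psum v ρ)]
          exact hagp n hn
        · rw [hrps, Nat.add_comm p (psum v ρ)]
          exact hvp.2

lemma phi_lyndon {a b : ℕ} (ha : 0 < a) (hab : a < b) (hae : Even a) (hbe : Even b)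
    {W : ℕ → ℕ → ℕ} (hWc : SmoothChain a b W)
    (hphi : ∀ k, W k 0 = if k = 0 then a else b) : IsInfLyndon (W 0) := by
  have ha2 : 2 ≤ a := by rcases hae with ⟨c, hc⟩; omega
  have hval : ∀ n, W 1 n = a ∨ W 1 n = b := (hWc 1).1
  have hpos : ∀ n, 0 < W 1 n := chain_pos ha hab hWc 1
  have hw00 : W 0 0 = a := by simpa using hphi 0
  have hb1 : W 1 0 = b := by simpa using hphi 1
  have hw : W 0 = expand a b (W 1) := by
    have e := (hWc 0).2
    rw [hw00, if_pos rfl] at e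
    simpa using e
  have h12 : W 2 = W 1 := by
    have hc1 : SmoothChain a b (fun k => W (k+1)) := fun k => hWc (k+1)
    have hc2 : SmoothChain a b (fun k => W (k+2)) := fun k => hWc (k+2)
    have h0 : ∀ k, (fun k => W (k+1)) k 0 = (fun k => W (k+2)) k 0 := by
      intro k
      show W (k+1) 0 = W (k+2) 0
      rw [hphi (k+1), hphi (k+2), if_neg (by omega), if_neg (by omega)]
    have hext := chain_ext hc1 hc2 h0
    funext n
    exact (hext n 0).symm
  have hv : W 1 = expand b a (W 1) := by
    have e := (hWc 1).2
    rw [hb1, if_neg (by omega)] at e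
    have e2 : W (1+1) = W 1 := h12
    rw [e2] at e
    exact e
  intro i hi
  rcases (hWc 0).1 i with hwa | hwb
  · -- W 0 i = a
    obtain ⟨hL, hR⟩ := blockIdx_spec hpos i
    set ρ := blockIdx (W 1) i with hρdef
    have hρe : ρ % 2 = 0 := by
      by_contra hodd
      have e := congrFun hw i
      rw [expand_apply hpos hL hR, if_neg hodd] at e
      omega
    have hps := psum_succ (W 1) ρ
    have hpse : psum (W 1) ρ % 2 = 0 := psum_mod_two (chain_mod hae hbe hWc 1) ρ
    by_cases hl : psum (W 1) ρ + W 1 ρ - i < b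
    · set l := psum (W 1) ρ + W 1 ρ - i with hldef
      refine ⟨l, ?_, ?_⟩
      · intro n hn
        show W 0 n = W 0 (n + i)
        have h1 : W 0 n = a := by
          have e := congrFun hw n
          rw [expand_apply hpos (j := 0) (Nat.zero_le n)
            (by have h1 := psum_succ (W 1) 0; have h0 : psum (W 1) 0 = 0 := rfl; omega)] at e
          simpa using e
        have h2 : W 0 (n + i) = a := by
          have e := congrFun hw (n + i)
          rw [expand_apply hpos (j := ρ) (by omega) (by omega), if_pos hρe] at e
          exact e
        rw [h1, h2]
      · show W 0 l < W 0 (l + i)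
        have h1 : W 0 l = a := by
          have e := congrFun hw l
          rw [expand_apply hpos (j := 0) (Nat.zero_le l)
            (by have h1 := psum_succ (W 1) 0; have h0 : psum (W 1) 0 = 0 := rfl; omega)] at e
          simpa using e
        have h2 : W 0 (l + i) = b := by
          have e := congrFun hw (l + i)
          rw [expand_apply hpos (j := ρ + 1) (by omega)
            (by have h1 := psum_succ (W 1) (ρ+1); have := hpos (ρ+1); omega),
            if_neg (by omega)] at e
          exact e
        rw [h1, h2]; exact hab
    · have hvρb : W 1 ρ ≤ b := by rcases hval ρ with h | h <;> omega
      have hrps : i = psum (W 1) ρ := by omega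
      have hρpos : 0 < ρ := by
        rcases Nat.eq_zero_or_pos ρ with h0 | h
        · exfalso; have h00 : psum (W 1) 0 = 0 := rfl; rw [h0] at hrps; omega
        · exact h
      obtain ⟨q, hqe, hqag, hqb, hqa⟩ := claimC ha hab hae hbe hval hv ρ hρpos hρe
      have hvals' : ∀ n, (fun m => W 1 (m + ρ)) n = a ∨ (fun m => W 1 (m + ρ)) n = b :=
        fun n => hval (n + ρ)
      obtain ⟨p, hpe, hagp, hnep, hiffp⟩ := transfer ha hab hae hbe (Or.inl ⟨rfl, rfl⟩)
        hval hvals' hqe (fun n hn => hqag n hn)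
        (show W 1 q ≠ W 1 (q + ρ) by rw [hqb, hqa]; omega)
        (show W 1 q < W 1 (q + ρ) ↔ False by rw [hqb, hqa]; exact iff_of_false (by omega) id)
      have hltp : expand a b (W 1) p < expand a b (fun m => W 1 (m + ρ)) p :=
        hiffp.mpr (iff_of_false id (by omega))
      have es : ∀ n, expand a b (fun m => W 1 (m + ρ)) n
          = expand a b (W 1) (psum (W 1) ρ + n) := fun n => (expand_shift hpos hρe n).symm
      simp only [es] at hagp hltp
      simp only [← hw] at hagp hltp
      refine ⟨p, ?_, ?_⟩
      · intro n hn
        show W 0 n = W 0 (n + i)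
        rw [hrps, Nat.add_comm n (psum (W 1) ρ)]
        exact hagp n hn
      · show W 0 p < W 0 (p + i)
        rw [hrps, Nat.add_comm p (psum (W 1) ρ)]
        exact hltp
  · exact ⟨0, fun j hj => absurd hj (Nat.not_lt_zero j),
      by show W 0 0 < W 0 (0 + i); rw [Nat.zero_add, hw00, hwb]; exact hab⟩

/-- Over an even alphabet `{a < b}`, the only infinite smooth word that is an
infinite Lyndon word is the lexicographically minimal smooth word `m_{a,b}`,
which satisfies `Φ(m_{a,b}) = a·b^ω`. -/
theorem smooth_lyndon_even_alphabet (a b : ℕ) (ha : 0 < a) (hab : a < b)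
    (hae : Even a) (hbe : Even b) :
    ∀ w : ℕ → ℕ, IsSmooth a b w →
      (IsInfLyndon w ↔
        ((∀ w', IsSmooth a b w' → ¬ InfLex w' w) ∧
          ∀ W : ℕ → ℕ → ℕ, W 0 = w → SmoothChain a b W →
            ∀ k, W k 0 = if k = 0 then a else b)) := by
  rintro w ⟨W, hW0, hWc⟩
  subst hW0
  constructor
  · intro hL
    refine ⟨phi_min ha hab hae hbe hWc (lyndon_phi ha hab hae hbe hWc hL), ?_⟩
    intro W' hW'0 hW'c
    exact lyndon_phi ha hab hae hbe hW'c (by rw [hW'0]; exact hL)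
  · rintro ⟨-, hphi⟩
    exact phi_lyndon ha hab hae hbe hWc (hphi W rfl hWc)
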